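/- Let R be an indecomposable commutative ring with unit and G a Hausdorff ample groupoid. Let m be an element of the convolution algebra RG admitting m' with mm'm = m, m'mm' = m', and mD(G)m' ∪ m'D(G)m ⊆ D(G). Then m'm is the characteristic function of d(supp(m)) and mm' is the characteristic function of r(supp(m)). -/

import Mathlib

/-- A topological groupoid whose arrows form the space `A`; objects are identified
with identity arrows via the source map. All structure maps are continuous and the
source map is a local homeomorphism (étale). -/
structure AmpleGroupoid (A : Type*) [TopologicalSpace A] where
  src : A → A
  rng : A → A
  comp : A → A → A
  inv : A → A
  src_src : ∀ a, src (src a) = src a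
  rng_src : ∀ a, rng (src a) = src a
  src_rng : ∀ a, src (rng a) = rng a
  rng_rng : ∀ a, rng (rng a) = rng a
  src_comp : ∀ a b, src a = rng b → src (comp a b) = src b
  rng_comp : ∀ a b, src a = rng b → rng (comp a b) = rng a
  comp_assoc : ∀ a b c, src a = rng b → src b = rng c →
    comp (comp a b) c = comp a (comp b c)
  id_comp : ∀ a, comp (rng a) a = a
  comp_id : ∀ a, comp a (src a) = a
  inv_comp : ∀ a, comp (inv a) a = src a
  comp_inv : ∀ a, comp a (inv a) = rng a
  src_inv : ∀ a, src (inv a) = rng a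
  rng_inv : ∀ a, rng (inv a) = src a
  continuous_inv : Continuous inv
  continuous_comp : Continuous fun p : {p : A × A // src p.1 = rng p.2} =>
    comp p.1.1 p.1.2
  isLocalHomeomorph_src : IsLocalHomeomorph src
  isLocalHomeomorph_rng : IsLocalHomeomorph rng

namespace AmpleGroupoid

variable {A : Type*} [TopologicalSpace A] (G : AmpleGroupoid A)

/-- The unit space (identity arrows). -/
def units : Set A := Set.range G.src

/-- The unit space has a basis of compact open sets (ampleness). -/
def AmpleUnits : Prop := ∀ U : Set A, IsOpen U → ∀ a ∈ U ∩ G.units,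
  ∃ K : Set A, IsCompact K ∧ IsOpen K ∧ a ∈ K ∧ K ⊆ U ∩ G.units

/-- The unit space is Hausdorff. -/
def UnitsT2 : Prop := ∀ a ∈ G.units, ∀ b ∈ G.units, a ≠ b →
  ∃ U V : Set A, IsOpen U ∧ IsOpen V ∧ a ∈ U ∧ b ∈ V ∧ Disjoint U V

/-- A (open) local bisection: an open set on which both `src` and `rng` are injective. -/
def IsBisection (U : Set A) : Prop :=
  IsOpen U ∧ Set.InjOn G.src U ∧ Set.InjOn G.rng U

/-- Pointwise product of subsets of arrows. -/
def setMul (U V : Set A) : Set A :=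
  {c | ∃ a ∈ U, ∃ b ∈ V, G.src a = G.rng b ∧ c = G.comp a b}

/-- Pointwise inverse of a subset of arrows. -/
def setInv (U : Set A) : Set A := G.inv '' U

/-- Members of `Γ_c(G)`: compact open local bisections. -/
def Gamma (U : Set A) : Prop := IsCompact U ∧ G.IsBisection U

end AmpleGroupoid

namespace AmpleGroupoid

variable {A : Type*} [TopologicalSpace A] {R : Type*} [CommRing R]

/-- The convolution product on `R`-valued functions on the arrow space:
`(f * g)(γ) = Σ_{d(α) = d(γ)} f(γα⁻¹) g(α)`. -/
noncomputable def conv (G : AmpleGroupoid A) (f g : A → R) : A → R :=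
  fun γ => ∑ᶠ (α : A) (_ : G.src α = G.src γ), f (G.comp γ (G.inv α)) * g α

/-- Membership in the convolution algebra `RG`: locally constant with compact
support. -/
def InRG (f : A → R) : Prop :=
  IsLocallyConstant f ∧ IsCompact (Function.support f)

/-- Membership in the diagonal subalgebra `D(G)`: an element of `RG` supported on
the unit space. -/
def InDiag (G : AmpleGroupoid A) (f : A → R) : Prop :=
  InRG f ∧ Function.support f ⊆ G.units

/-- The isotropy bundle: arrows with equal source and range. -/
def iso (G : AmpleGroupoid A) : Set A := {a | G.src a = G.rng a}

end AmpleGroupoid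

/-!
Since `m'm` and `mm'` are idempotent (from `mm'm = m` and `m'mm' = m'`), it suffices to see
that they lie in `D(G)` and to compute their supports. Ampleness gives a characteristic function
`d ∈ D(G)` of a compact open set of units with `md = m`, so `mm' = mdm' ∈ D(G)`, and likewise
`m'm ∈ D(G)`. An idempotent of `D(G)` takes idempotent values, hence, `R` being indecomposable,
is the characteristic function of its support. Multiplying by a diagonal element on the right
(left) multiplies pointwise by its values at `d(γ)` (`r(γ)`), so `m(m'm) = m` and `(mm')m = m`
force `supp(m'm) = d(supp m)` and `supp(mm') = r(supp m)`.

Associativity of convolution, needed for the idempotence, holds because a compactly supported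
function meets each fibre of `d` in finitely many arrows: `d` is étale and the space is Hausdorff.
-/

open Function Set

namespace AmpleGroupoid

variable {A : Type*} [TopologicalSpace A] (G : AmpleGroupoid A)

section Groupoid

theorem src_mem_units (a : A) : G.src a ∈ G.units := ⟨a, rfl⟩

variable {G}

theorem src_eq_self_of_mem_units {u : A} (h : u ∈ G.units) : G.src u = u := by
  obtain ⟨a, rfl⟩ := h
  exact G.src_src a

theorem rng_eq_self_of_mem_units {u : A} (h : u ∈ G.units) : G.rng u = u := by
  obtain ⟨a, rfl⟩ := h
  exact G.rng_src a

theorem inv_eq_of_comp_eq_rng {x y : A} (h : G.src x = G.rng y)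
    (hxy : G.comp x y = G.rng x) : G.inv x = y := by
  calc G.inv x = G.comp (G.inv x) (G.rng x) := by rw [← G.src_inv, G.comp_id]
    _ = G.comp (G.comp (G.inv x) x) y := by
      rw [← hxy, G.comp_assoc _ _ _ (G.src_inv x) h]
    _ = y := by rw [G.inv_comp, h, G.id_comp]

theorem inv_eq_self_of_mem_units {u : A} (h : u ∈ G.units) : G.inv u = u := by
  have hu := G.id_comp u
  rw [rng_eq_self_of_mem_units h] at hu
  exact inv_eq_of_comp_eq_rng (by rw [src_eq_self_of_mem_units h, rng_eq_self_of_mem_units h])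
    (by rw [hu, rng_eq_self_of_mem_units h])

theorem comp_inv_cancel_right {a b : A} (h : G.src a = G.rng b) :
    G.comp (G.comp a b) (G.inv b) = a := by
  rw [G.comp_assoc a b (G.inv b) h (G.rng_inv b).symm, G.comp_inv, ← h, G.comp_id]

theorem inv_comp_cancel_right {γ α : A} (h : G.src α = G.src γ) :
    G.comp (G.comp γ (G.inv α)) α = γ := by
  rw [G.comp_assoc γ (G.inv α) α (by rw [G.rng_inv, h]) (G.src_inv α), G.inv_comp, h,
    G.comp_id]

theorem src_comp_inv {γ α : A} (h : G.src α = G.src γ) :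
    G.src (G.comp γ (G.inv α)) = G.rng α := by
  rw [G.src_comp _ _ (by rw [G.rng_inv, h]), G.src_inv]

theorem inv_comp_rev {a b : A} (h : G.src a = G.rng b) :
    G.inv (G.comp a b) = G.comp (G.inv b) (G.inv a) := by
  refine inv_eq_of_comp_eq_rng ?_ ?_
  · rw [G.src_comp a b h, G.rng_comp _ _ (by rw [G.src_inv, G.rng_inv, h]), G.rng_inv]
  · rw [← G.comp_assoc _ _ _ (by rw [G.src_comp a b h, G.rng_inv])
      (by rw [G.src_inv, G.rng_inv, h]), comp_inv_cancel_right h, G.comp_inv,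
      G.rng_comp a b h]

end Groupoid

section Convolution

variable {R : Type*} [CommRing R]

theorem conv_apply (f g : A → R) (γ : A) :
    G.conv f g γ = ∑ᶠ α ∈ G.src ⁻¹' {G.src γ}, f (G.comp γ (G.inv α)) * g α :=
  rfl

theorem exists_of_conv_apply_ne_zero {f g : A → R} {γ : A} (h : G.conv f g γ ≠ 0) :
    ∃ α, G.src α = G.src γ ∧ f (G.comp γ (G.inv α)) ≠ 0 ∧ g α ≠ 0 := by
  obtain ⟨α, hα, hne⟩ := exists_ne_zero_of_finsum_mem_ne_zero h
  exact ⟨α, hα, left_ne_zero_of_mul hne, right_ne_zero_of_mul hne⟩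

theorem src_mem_image_support_of_conv_apply_ne_zero {f g : A → R} {γ : A}
    (h : G.conv f g γ ≠ 0) : G.src γ ∈ G.src '' support g := by
  obtain ⟨α, hα, -, hg⟩ := G.exists_of_conv_apply_ne_zero h
  exact ⟨α, hg, hα⟩

theorem rng_mem_image_support_of_conv_apply_ne_zero {f g : A → R} {γ : A}
    (h : G.conv f g γ ≠ 0) : G.rng γ ∈ G.rng '' support f := by
  obtain ⟨α, hα, hf, -⟩ := G.exists_of_conv_apply_ne_zero h
  exact ⟨_, hf, G.rng_comp _ _ (by rw [G.rng_inv, hα])⟩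

theorem conv_apply_of_support_subset_units_right (f : A → R) {d : A → R}
    (hd : support d ⊆ G.units) (γ : A) : G.conv f d γ = f γ * d (G.src γ) := by
  classical
  rw [conv, finsum_eq_single _ (G.src γ), finsum_eq_if, if_pos (G.src_src γ),
    inv_eq_self_of_mem_units (G.src_mem_units γ), G.comp_id]
  intro α hα
  rw [finsum_eq_if]
  split_ifs with h
  · by_contra hne
    exact hα ((src_eq_self_of_mem_units (hd (right_ne_zero_of_mul hne))).symm.trans h)
  · rfl

theorem conv_apply_of_support_subset_units_left {d : A → R} (f : A → R)
    (hd : support d ⊆ G.units) (γ : A) : G.conv d f γ = d (G.rng γ) * f γ := by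
  classical
  rw [conv, finsum_eq_single _ γ, finsum_eq_if, if_pos rfl, G.comp_inv]
  intro α hα
  rw [finsum_eq_if]
  split_ifs with h
  · by_contra hne
    have hu := hd (left_ne_zero_of_mul hne)
    have hrng : G.comp γ (G.inv α) = G.rng α := by
      rw [← src_eq_self_of_mem_units hu, src_comp_inv h]
    apply hα
    rw [← inv_comp_cancel_right h, hrng, G.id_comp]
  · rfl

theorem image_src_support_subset_of_conv_eq_self {f d : A → R} (hd : support d ⊆ G.units)
    (h : G.conv f d = f) : G.src '' support f ⊆ support d := by
  rintro _ ⟨γ, hγ, rfl⟩ hdγ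
  apply hγ
  rw [← h, G.conv_apply_of_support_subset_units_right f hd, hdγ, mul_zero]

theorem image_rng_support_subset_of_conv_eq_self {d f : A → R} (hd : support d ⊆ G.units)
    (h : G.conv d f = f) : G.rng '' support f ⊆ support d := by
  rintro _ ⟨γ, hγ, rfl⟩ hdγ
  apply hγ
  rw [← h, G.conv_apply_of_support_subset_units_left f hd, hdγ, zero_mul]

theorem support_conv_eq_image_src {f g : A → R} (hsupp : support (G.conv g f) ⊆ G.units)
    (h : G.conv f (G.conv g f) = f) : support (G.conv g f) = G.src '' support f := by
  refine subset_antisymm (fun u hu => ?_) (G.image_src_support_subset_of_conv_eq_self hsupp h)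
  rw [← src_eq_self_of_mem_units (hsupp hu)]
  exact G.src_mem_image_support_of_conv_apply_ne_zero hu

theorem support_conv_eq_image_rng {f g : A → R} (hsupp : support (G.conv f g) ⊆ G.units)
    (h : G.conv (G.conv f g) f = f) : support (G.conv f g) = G.rng '' support f := by
  refine subset_antisymm (fun u hu => ?_) (G.image_rng_support_subset_of_conv_eq_self hsupp h)
  rw [← rng_eq_self_of_mem_units (hsupp hu)]
  exact G.rng_mem_image_support_of_conv_apply_ne_zero hu

theorem eq_indicator_support_of_conv_self (hR : ∀ e : R, e * e = e → e = 0 ∨ e = 1)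
    {e : A → R} (he : support e ⊆ G.units) (hee : G.conv e e = e) :
    e = (support e).indicator fun _ => 1 := by
  funext u
  by_cases hu : e u = 0
  · rw [indicator_of_notMem (not_not.2 hu), hu]
  · have hidem : e u * e u = e u := by
      have := congrFun hee u
      rwa [G.conv_apply_of_support_subset_units_right e he, src_eq_self_of_mem_units (he hu)]
        at this
    rw [indicator_of_mem hu, (hR _ hidem).resolve_left hu]

def FiniteSrcFibers (f : A → R) : Prop := ∀ x, (support f ∩ G.src ⁻¹' {x}).Finite

theorem conv_apply_eq_sum (f g : A → R) {γ : A} {t : Finset A}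
    (h₁ : support g ∩ G.src ⁻¹' {G.src γ} ⊆ t) (h₂ : ↑t ⊆ G.src ⁻¹' {G.src γ}) :
    G.conv f g γ = ∑ α ∈ t, f (G.comp γ (G.inv α)) * g α :=
  finsum_mem_eq_sum_of_subset _ (fun _ hα => h₁ ⟨support_mul_subset_right _ _ hα.2, hα.1⟩) h₂

theorem conv_apply_comp_inv (f g : A → R) {γ β : A} (h : G.src β = G.src γ) :
    G.conv f g (G.comp γ (G.inv β)) =
      ∑ᶠ δ ∈ G.src ⁻¹' {G.src γ}, f (G.comp γ (G.inv δ)) * g (G.comp δ (G.inv β)) := by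
  rw [conv_apply]
  refine finsum_mem_eq_of_bijOn (fun α => G.comp α β) ⟨?_, ?_, ?_⟩ ?_
  · intro α hα
    simp only [mem_preimage, mem_singleton_iff, src_comp_inv h] at hα ⊢
    rw [G.src_comp α β hα, h]
  · intro α hα α' hα' heq
    simp only [mem_preimage, mem_singleton_iff, src_comp_inv h] at hα hα' heq
    rw [← comp_inv_cancel_right hα, heq, comp_inv_cancel_right hα']
  · intro δ hδ
    refine ⟨G.comp δ (G.inv β), ?_, inv_comp_cancel_right (h.trans hδ.symm)⟩
    simp only [mem_preimage, mem_singleton_iff] at hδ ⊢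
    rw [src_comp_inv h, src_comp_inv (h.trans hδ.symm)]
  · intro α hα
    simp only [mem_preimage, mem_singleton_iff, src_comp_inv h] at hα
    rw [comp_inv_cancel_right hα, inv_comp_rev hα, G.comp_assoc _ _ _ (by rw [G.rng_inv, h])
      (by rw [G.src_inv, G.rng_inv, hα])]

theorem conv_assoc (a b c : A → R) (hb : G.FiniteSrcFibers b) (hc : G.FiniteSrcFibers c) :
    G.conv (G.conv a b) c = G.conv a (G.conv b c) := by
  classical
  funext γ
  set F := (hc (G.src γ)).toFinset
  -- a finite part of the fibre of `d` through `γ` outside which all terms below vanish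
  set D := F.biUnion fun β => (hb (G.rng β)).toFinset.image fun α => G.comp α β
  have mem_F : ∀ β, β ∈ F ↔ c β ≠ 0 ∧ G.src β = G.src γ := by simp [F]
  have hF : (F : Set A) ⊆ G.src ⁻¹' {G.src γ} := fun β hβ => ((mem_F β).1 hβ).2
  have hD : (D : Set A) ⊆ G.src ⁻¹' {G.src γ} := by
    intro δ hδ
    simp only [D, Finset.coe_biUnion, Finset.coe_image, Set.Finite.coe_toFinset, mem_iUnion,
      mem_image] at hδ
    obtain ⟨β, hβ, α, hα, rfl⟩ := hδ
    rw [mem_preimage, mem_singleton_iff, G.src_comp α β hα.2, ((mem_F β).1 hβ).2]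
  have mem_D : ∀ β ∈ F, ∀ δ, G.src δ = G.src γ → b (G.comp δ (G.inv β)) ≠ 0 → δ ∈ D := by
    intro β hβ δ hδ hb0
    have hβδ : G.src β = G.src δ := ((mem_F β).1 hβ).2.trans hδ.symm
    refine Finset.mem_biUnion.2 ⟨β, hβ, Finset.mem_image.2 ⟨_, ?_, inv_comp_cancel_right hβδ⟩⟩
    exact (hb _).mem_toFinset.2 ⟨hb0, src_comp_inv hβδ⟩
  calc G.conv (G.conv a b) c γ = ∑ β ∈ F, G.conv a b (G.comp γ (G.inv β)) * c β :=
        G.conv_apply_eq_sum _ _ (fun β hβ => (mem_F β).2 hβ) hF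
    _ = ∑ β ∈ F, (∑ δ ∈ D, a (G.comp γ (G.inv δ)) * b (G.comp δ (G.inv β))) * c β := by
        refine Finset.sum_congr rfl fun β hβ => ?_
        rw [G.conv_apply_comp_inv _ _ ((mem_F β).1 hβ).2]
        exact congrArg (· * c β) (finsum_mem_eq_sum_of_subset _
          (fun δ hδ => mem_D β hβ δ hδ.1 (right_ne_zero_of_mul hδ.2)) hD)
    _ = ∑ δ ∈ D, a (G.comp γ (G.inv δ)) * ∑ β ∈ F, b (G.comp δ (G.inv β)) * c β := by
        simp only [Finset.sum_mul, Finset.mul_sum, mul_assoc]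
        exact Finset.sum_comm
    _ = ∑ δ ∈ D, a (G.comp γ (G.inv δ)) * G.conv b c δ := by
        refine Finset.sum_congr rfl fun δ hδ => ?_
        have hδγ : G.src δ = G.src γ := hD hδ
        rw [G.conv_apply_eq_sum b c (t := F) (by rw [hδγ]; exact fun β hβ => (mem_F β).2 hβ)
          (by rw [hδγ]; exact hF)]
    _ = G.conv a (G.conv b c) γ := by
        refine (G.conv_apply_eq_sum _ _ (fun δ hδ => ?_) hD).symm
        obtain ⟨β, hβ, hb0, hc0⟩ := G.exists_of_conv_apply_ne_zero hδ.1
        exact mem_D β ((mem_F β).2 ⟨hc0, hβ.trans hδ.2⟩) δ hδ.2 hb0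

end Convolution

section Ample

variable {R : Type*} [CommRing R]

theorem finiteSrcFibers_of_isCompact [T2Space A] {f : A → R} (hf : IsCompact (support f)) :
    G.FiniteSrcFibers f := fun _ =>
  (hf.inter_right (isClosed_singleton.preimage G.isLocalHomeomorph_src.continuous)).finite
    (G.isLocalHomeomorph_src.isLocalHomeomorphOn.isDiscrete_of_image
      (Set.subsingleton_singleton.anti (image_subset_iff.2 inter_subset_right)).isDiscrete)

theorem isOpen_units : IsOpen G.units :=
  G.isLocalHomeomorph_src.isOpenMap.isOpen_range

theorem exists_isCompact_isOpen_between (hG : G.AmpleUnits) {C : Set A} (hC : IsCompact C)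
    (hCu : C ⊆ G.units) : ∃ K, IsCompact K ∧ IsOpen K ∧ C ⊆ K ∧ K ⊆ G.units := by
  have h : ∀ a ∈ C, ∃ K : Set A, IsCompact K ∧ IsOpen K ∧ a ∈ K ∧ K ⊆ G.units ∩ G.units :=
    fun a ha => hG G.units G.isOpen_units a ⟨hCu ha, hCu ha⟩
  choose K hKc hKo hKa hKu using h
  obtain ⟨t, ht⟩ := hC.elim_nhds_subcover' K fun a ha => (hKo a ha).mem_nhds (hKa a ha)
  refine ⟨⋃ a ∈ t, K a a.2, t.finite_toSet.isCompact_biUnion fun a _ => hKc a a.2,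
    isOpen_biUnion fun a _ => hKo a a.2, ht, ?_⟩
  simp only [iUnion_subset_iff]
  exact fun a _ => (hKu a a.2).trans inter_subset_left

theorem inDiag_indicator_one [T2Space A] {K : Set A} (hKc : IsCompact K) (hKo : IsOpen K)
    (hKu : K ⊆ G.units) : G.InDiag (K.indicator fun _ => (1 : R)) := by
  have hlc : IsLocallyConstant (K.indicator fun _ => (1 : R)) :=
    (LocallyConstant.charFn R ⟨hKc.isClosed, hKo⟩).isLocallyConstant
  have hsupp : support (K.indicator fun _ => (1 : R)) ⊆ K := support_indicator_subset
  refine ⟨⟨hlc, hKc.of_isClosed_subset ?_ hsupp⟩, hsupp.trans hKu⟩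
  exact (hlc.isOpen_fiber 0).isClosed_compl

theorem conv_indicator_one_right (f : A → R) {K : Set A} (hKu : K ⊆ G.units)
    (h : G.src '' support f ⊆ K) : G.conv f (K.indicator fun _ => 1) = f := by
  funext γ
  rw [G.conv_apply_of_support_subset_units_right f (support_indicator_subset.trans hKu)]
  by_cases hγ : f γ = 0
  · rw [hγ, zero_mul]
  · rw [indicator_of_mem (h ⟨γ, hγ, rfl⟩), mul_one]

theorem exists_inDiag_conv_eq_self [T2Space A] (hG : G.AmpleUnits) {f : A → R}
    (hf : IsCompact (support f)) : ∃ d, G.InDiag d ∧ G.conv f d = f := by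
  obtain ⟨K, hKc, hKo, hfK, hKu⟩ := G.exists_isCompact_isOpen_between hG
    (hf.image G.isLocalHomeomorph_src.continuous) (image_subset_iff.2 fun a _ => G.src_mem_units a)
  exact ⟨_, G.inDiag_indicator_one hKc hKo hKu, G.conv_indicator_one_right f hKu hfK⟩

end Ample

end AmpleGroupoid

open AmpleGroupoid in
/-- Over an indecomposable commutative ring `R`, if `m` belongs to
the normalizer of the diagonal of the convolution algebra of a Hausdorff ample
groupoid (witnessed by `m'`), then `m'm = χ_{d(supp m)}` and `mm' = χ_{r(supp m)}`. -/
theorem stmt16 {A : Type*} [TopologicalSpace A] [T2Space A]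
    {R : Type*} [CommRing R]
    (hR : ∀ e : R, e * e = e → e = 0 ∨ e = 1)
    (G : AmpleGroupoid A) (hG : G.AmpleUnits)
    (m m' : A → R) (hm : InRG m) (hm' : InRG m')
    (h1 : G.conv (G.conv m m') m = m) (h2 : G.conv (G.conv m' m) m' = m')
    (h3 : ∀ d : A → R, G.InDiag d → G.InDiag (G.conv (G.conv m d) m'))
    (h4 : ∀ d : A → R, G.InDiag d → G.InDiag (G.conv (G.conv m' d) m)) :
    G.conv m' m = Set.indicator (G.src '' Function.support m) (fun _ => (1 : R)) ∧
    G.conv m m' = Set.indicator (G.rng '' Function.support m) (fun _ => (1 : R)) := by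
  have hfin := G.finiteSrcFibers_of_isCompact hm.2
  have hfin' := G.finiteSrcFibers_of_isCompact hm'.2
  obtain ⟨d, hd, hmd⟩ := G.exists_inDiag_conv_eq_self hG hm.2
  obtain ⟨d', hd', hmd'⟩ := G.exists_inDiag_conv_eq_self hG hm'.2
  have hf : G.InDiag (G.conv m m') := by simpa only [hmd] using h3 d hd
  have he : G.InDiag (G.conv m' m) := by simpa only [hmd'] using h4 d' hd'
  have hme : G.conv m (G.conv m' m) = m := by rw [← G.conv_assoc _ _ _ hfin' hfin, h1]
  have hee : G.conv (G.conv m' m) (G.conv m' m) = G.conv m' m := by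
    rw [← G.conv_assoc _ _ _ hfin' hfin, h2]
  have hff : G.conv (G.conv m m') (G.conv m m') = G.conv m m' := by
    rw [← G.conv_assoc _ _ _ hfin hfin', h1]
  constructor
  · rw [G.eq_indicator_support_of_conv_self hR he.2 hee, G.support_conv_eq_image_src he.2 hme]
  · rw [G.eq_indicator_support_of_conv_self hR hf.2 hff, G.support_conv_eq_image_rng hf.2 h1]
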